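/- arXiv:1410.7010 — 2 statements merged into one kernel-verified Lean document; each statement's English description precedes it below -/
import Mathlib

section
/- The exact solution u(x,t) = 4 atan[t · sech(x)] satisfies the sine-Gordon equation u_tt = u_xx − sin(u) for all (x,t) ∈ ℝ × ℝ, together with u(x,0) = 0 and u_t(x,0) = 4 sech(x). -/
/-!
Write `C = cosh x` and `D = C² + t²`. Differentiating directly, and using `cosh² - sinh² = 1`
once, gives `u_tt = -8tC / D²` and `u_xx = 4tC(C² - t² - 2) / D²`, while the double-angle
formulas applied twice give `sin u = 4tC(C² - t²) / D²`; the equation is then an identity of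
rational functions.
-/

open Real

theorem sin_four_arctan (s : ℝ) :
    sin (4 * arctan s) = 4 * s * (1 - s ^ 2) / (1 + s ^ 2) ^ 2 := by
  have hsq : √(1 + s ^ 2) ^ 2 = 1 + s ^ 2 := sq_sqrt (by positivity)
  have hne : √(1 + s ^ 2) ≠ 0 := by positivity
  rw [show 4 * arctan s = 2 * (2 * arctan s) by ring, sin_two_mul, sin_two_mul, cos_two_mul,
    sin_arctan, cos_arctan]
  field_simp
  rw [show √(1 + s ^ 2) ^ 4 = (√(1 + s ^ 2) ^ 2) ^ 2 by ring, hsq]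
  ring

theorem sin_four_arctan_mul_inv {c : ℝ} (hc : c ≠ 0) (t : ℝ) :
    sin (4 * arctan (t * c⁻¹)) = 4 * t * c * (c ^ 2 - t ^ 2) / (c ^ 2 + t ^ 2) ^ 2 := by
  have hD : c ^ 2 + t ^ 2 ≠ 0 := by positivity
  rw [sin_four_arctan]
  field_simp

theorem hasDerivAt_four_arctan_mul_inv {c : ℝ} (hc : c ≠ 0) (t : ℝ) :
    HasDerivAt (fun τ ↦ 4 * arctan (τ * c⁻¹)) (4 * c / (c ^ 2 + t ^ 2)) t := by
  have hD : c ^ 2 + t ^ 2 ≠ 0 := by positivity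
  refine ((hasDerivAt_mul_const c⁻¹).arctan.const_mul 4).congr_deriv ?_
  field_simp

theorem hasDerivAt_four_mul_div_sq_add_sq {c : ℝ} (hc : c ≠ 0) (t : ℝ) :
    HasDerivAt (fun τ ↦ 4 * c / (c ^ 2 + τ ^ 2)) (-(8 * t * c) / (c ^ 2 + t ^ 2) ^ 2) t := by
  have hD : c ^ 2 + t ^ 2 ≠ 0 := by positivity
  have hden : HasDerivAt (fun τ ↦ c ^ 2 + τ ^ 2) (2 * t) t := by
    simpa using (hasDerivAt_pow 2 t).const_add (c ^ 2)
  refine ((hasDerivAt_const t (4 * c)).div hden hD).congr_deriv ?_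
  field_simp
  ring

theorem hasDerivAt_four_arctan_mul_inv_cosh (t x : ℝ) :
    HasDerivAt (fun ξ ↦ 4 * arctan (t * (cosh ξ)⁻¹))
      (-(4 * t * sinh x) / (cosh x ^ 2 + t ^ 2)) x := by
  have hc : cosh x ≠ 0 := (cosh_pos x).ne'
  have hD : cosh x ^ 2 + t ^ 2 ≠ 0 := by positivity
  have hsech : HasDerivAt (fun ξ ↦ (cosh ξ)⁻¹) (-sinh x / cosh x ^ 2) x :=
    (hasDerivAt_cosh x).inv hc
  refine ((hsech.const_mul t).arctan.const_mul 4).congr_deriv ?_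
  field_simp

theorem hasDerivAt_sinh_div_cosh_sq_add_sq (t x : ℝ) :
    HasDerivAt (fun ξ ↦ -(4 * t * sinh ξ) / (cosh ξ ^ 2 + t ^ 2))
      (4 * t * cosh x * (cosh x ^ 2 - t ^ 2 - 2) / (cosh x ^ 2 + t ^ 2) ^ 2) x := by
  have hD : cosh x ^ 2 + t ^ 2 ≠ 0 := by positivity
  have hnum : HasDerivAt (fun ξ ↦ -(4 * t * sinh ξ)) (-(4 * t * cosh x)) x :=
    ((hasDerivAt_sinh x).const_mul (4 * t)).neg
  have hden : HasDerivAt (fun ξ ↦ cosh ξ ^ 2 + t ^ 2) (2 * cosh x * sinh x) x := by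
    simpa using ((hasDerivAt_cosh x).pow 2).add_const (t ^ 2)
  refine (hnum.div hden hD).congr_deriv ?_
  field_simp
  linear_combination (-2 * t) * cosh_sq x

/-- The function `u(x,t) = 4 atan(t · sech x)` is the soliton solution of the
sine-Gordon equation for the critical parameter `γ = 1`. -/
theorem stmt18 (u : ℝ → ℝ → ℝ)
    (hu : ∀ x t : ℝ, u x t = 4 * Real.arctan (t * (Real.cosh x)⁻¹)) :
    (∀ x t : ℝ,
      deriv (deriv (fun τ => u x τ)) t =
        deriv (deriv (fun ξ => u ξ t)) x - Real.sin (u x t)) ∧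
    (∀ x : ℝ, u x 0 = 0) ∧
    (∀ x : ℝ, deriv (fun τ => u x τ) 0 = 4 * (Real.cosh x)⁻¹) := by
  have hc (x : ℝ) : cosh x ≠ 0 := (cosh_pos x).ne'
  have hu_t (x : ℝ) :
      deriv (fun τ ↦ u x τ) = fun t ↦ 4 * cosh x / (cosh x ^ 2 + t ^ 2) := by
    funext t
    simp only [hu]
    exact (hasDerivAt_four_arctan_mul_inv (hc x) t).deriv
  have hu_x (t : ℝ) :
      deriv (fun ξ ↦ u ξ t) = fun x ↦ -(4 * t * sinh x) / (cosh x ^ 2 + t ^ 2) := by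
    funext x
    simp only [hu]
    exact (hasDerivAt_four_arctan_mul_inv_cosh t x).deriv
  refine ⟨fun x t ↦ ?_, fun x ↦ by simp [hu], fun x ↦ ?_⟩
  · rw [hu_t, hu_x, (hasDerivAt_four_mul_div_sq_add_sq (hc x) t).deriv,
      (hasDerivAt_sinh_div_cosh_sq_add_sq t x).deriv, hu, sin_four_arctan_mul_inv (hc x)]
    ring
  · rw [hu_t]
    field_simp [hc x]
    ring
end

section
/- For γ > 1, the function u(x,t) = 4 atan[φ(t) sech(x/γ)] with φ(t) = (1/√(γ²−1)) sin((√(γ²−1)/γ) t) satisfies the sine-Gordon equation u_tt = u_xx − sin(u) on ℝ × ℝ, with u(x,0) = 0 and u_t(x,0) = (4/γ) sech(x/γ). -/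
open Real

/-!
Lamb's separation ansatz: for `u = 4 arctan (F(t) G(x))` the sine-Gordon equation holds as soon as
`F'² = A + B F²` and `G'² = (B + 1) G² - A G⁴` (together with the differentiated forms
`F'' = B F`, `G'' = (B + 1) G - 2 A G³`). After clearing the denominator `(1 + F²G²)²`, the
equation becomes a polynomial identity in `F, G` that these four relations turn into `0 = 0`,
using `sin (4 arctan v) = 4v(1 - v²)/(1 + v²)²`. The breather is the case
`F = sin(kt/γ)/k`, `G = sech(x/γ)`, `A = 1/γ²`, `B = -k²/γ²`, with `γ² = 1 + k²`.
-/

theorem sin_four_mul_arctan (v : ℝ) :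
    sin (4 * arctan v) = 4 * v * (1 - v ^ 2) / (1 + v ^ 2) ^ 2 := by
  have hs : √(1 + v ^ 2) ^ 2 = 1 + v ^ 2 := sq_sqrt (by positivity)
  have hs0 : √(1 + v ^ 2) ≠ 0 := by positivity
  rw [show 4 * arctan v = 2 * (2 * arctan v) by ring, sin_two_mul, cos_two_mul, sin_two_mul,
    sin_arctan, cos_arctan]
  field_simp
  linear_combination (-4 * v * (1 - v ^ 2) * √(1 + v ^ 2) ^ 2 - 8 * v * (1 + v ^ 2)) * hs

section ArctanComp

variable {h h' : ℝ → ℝ} (c : ℝ)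

theorem deriv_const_mul_arctan_comp (hh : ∀ s, HasDerivAt h (h' s) s) :
    deriv (fun s => c * arctan (h s)) = fun s => c * (h' s / (1 + h s ^ 2)) := by
  funext s
  rw [((hh s).arctan.const_mul c).deriv, one_div_mul_eq_div]

theorem deriv_deriv_const_mul_arctan_comp (hh : ∀ s, HasDerivAt h (h' s) s) {t h'' : ℝ}
    (hh' : HasDerivAt h' h'' t) :
    deriv (deriv fun s => c * arctan (h s)) t =
      c * ((h'' * (1 + h t ^ 2) - h' t * (2 * h t * h' t)) / (1 + h t ^ 2) ^ 2) := by
  have hden : HasDerivAt (fun s => 1 + h s ^ 2) (2 * h t * h' t) t := by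
    simpa using ((hh t).pow 2).const_add 1
  rw [deriv_const_mul_arctan_comp c hh]
  exact ((hh'.div hden (by positivity)).const_mul c).deriv

end ArctanComp

theorem sineGordon_four_mul_arctan_mul {F F' F'' G G' G'' : ℝ → ℝ} (A B : ℝ)
    (hF : ∀ t, HasDerivAt F (F' t) t) (hF' : ∀ t, HasDerivAt F' (F'' t) t)
    (hG : ∀ x, HasDerivAt G (G' x) x) (hG' : ∀ x, HasDerivAt G' (G'' x) x)
    (hF'' : ∀ t, F'' t = B * F t) (hF'_sq : ∀ t, F' t ^ 2 = A + B * F t ^ 2)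
    (hG'' : ∀ x, G'' x = (B + 1) * G x - 2 * A * G x ^ 3)
    (hG'_sq : ∀ x, G' x ^ 2 = (B + 1) * G x ^ 2 - A * G x ^ 4) (x t : ℝ) :
    deriv (deriv fun τ => 4 * arctan (F τ * G x)) t =
      deriv (deriv fun ξ => 4 * arctan (F t * G ξ)) x - sin (4 * arctan (F t * G x)) := by
  rw [deriv_deriv_const_mul_arctan_comp 4 (h := fun τ => F τ * G x)
      (fun τ => (hF τ).mul_const _) ((hF' t).mul_const _),
    deriv_deriv_const_mul_arctan_comp 4 (h := fun ξ => F t * G ξ) (fun ξ => (hG ξ).const_mul _)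
      ((hG' x).const_mul _), sin_four_mul_arctan, hF'', hG'']
  have hpos : 0 < 1 + (F t * G x) ^ 2 := by positivity
  field_simp
  linear_combination (-2 * F t * G x ^ 3) * hF'_sq t + (2 * F t ^ 3 * G x) * hG'_sq x

theorem hasDerivAt_one_div_mul_sin_div_mul {k : ℝ} (hk : k ≠ 0) (γ t : ℝ) :
    HasDerivAt (fun τ => 1 / k * sin (k / γ * τ)) (cos (k / γ * t) / γ) t :=
  (((hasDerivAt_id' t).const_mul (k / γ)).sin.const_mul (1 / k)).congr_deriv (by field_simp)

theorem hasDerivAt_inv_cosh_div (γ x : ℝ) :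
    HasDerivAt (fun ξ => (cosh (ξ / γ))⁻¹) (-sinh (x / γ) / (γ * cosh (x / γ) ^ 2)) x :=
  (((hasDerivAt_id' x).div_const γ).cosh.inv (cosh_pos _).ne').congr_deriv (by ring)

theorem hasDerivAt_neg_sinh_div_mul_cosh_sq {γ : ℝ} (hγ : γ ≠ 0) (x : ℝ) :
    HasDerivAt (fun ξ => -sinh (ξ / γ) / (γ * cosh (ξ / γ) ^ 2))
      ((cosh (x / γ))⁻¹ / γ ^ 2 - 2 * (cosh (x / γ))⁻¹ ^ 3 / γ ^ 2) x := by
  have hsinh := ((hasDerivAt_id' x).div_const γ).sinh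
  have hcosh := ((hasDerivAt_id' x).div_const γ).cosh
  have hc := (cosh_pos (x / γ)).ne'
  refine (hsinh.fun_neg.div ((hcosh.fun_pow 2).const_mul γ) (by simp [hγ, hc])).congr_deriv ?_
  field_simp
  linear_combination (-2 * cosh (x / γ)) * cosh_sq (x / γ)

theorem sineGordon_breather {k γ : ℝ} (hk : k ≠ 0) (hγ : γ ^ 2 = 1 + k ^ 2) (x t : ℝ) :
    deriv (deriv fun τ => 4 * arctan (1 / k * sin (k / γ * τ) * (cosh (x / γ))⁻¹)) t =
      deriv (deriv fun ξ => 4 * arctan (1 / k * sin (k / γ * t) * (cosh (ξ / γ))⁻¹)) x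
        - sin (4 * arctan (1 / k * sin (k / γ * t) * (cosh (x / γ))⁻¹)) := by
  have hγ0 : γ ≠ 0 := by rintro rfl; nlinarith
  refine sineGordon_four_mul_arctan_mul (F' := fun t => cos (k / γ * t) / γ)
    (F'' := fun t => -(k / γ ^ 2) * sin (k / γ * t)) (1 / γ ^ 2) (-(k / γ) ^ 2)
    (hasDerivAt_one_div_mul_sin_div_mul hk γ) (fun t => ?_) (hasDerivAt_inv_cosh_div γ)
    (hasDerivAt_neg_sinh_div_mul_cosh_sq hγ0) (fun t => ?_) (fun t => ?_) (fun x => ?_)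
    (fun x => ?_) x t
  · exact (((hasDerivAt_id' t).const_mul (k / γ)).cos.div_const γ).congr_deriv (by ring)
  · field_simp
  · field_simp
    linear_combination sin_sq_add_cos_sq (k * t / γ)
  · have hB : -(k / γ) ^ 2 + 1 = 1 / γ ^ 2 := by
      field_simp
      linear_combination hγ
    rw [hB]
    ring
  · have hc := (cosh_pos (x / γ)).ne'
    field_simp
    linear_combination -cosh_sq (x / γ) - cosh (x / γ) ^ 2 * hγ

/-- The breather soliton family of the sine-Gordon equation (`γ > 1`):
`u(x,t) = 4 atan(φ(t) sech(x/γ))` with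
`φ(t) = sin((√(γ²−1)/γ) t)/√(γ²−1)` solves `u_tt = u_xx − sin u`,
with `u(x,0) = 0` and `u_t(x,0) = (4/γ) sech(x/γ)`. -/
theorem stmt19 (γ : ℝ) (hγ : 1 < γ) (φ : ℝ → ℝ)
    (hφ : ∀ t : ℝ, φ t =
      (1 / Real.sqrt (γ ^ 2 - 1)) * Real.sin ((Real.sqrt (γ ^ 2 - 1) / γ) * t))
    (u : ℝ → ℝ → ℝ)
    (hu : ∀ x t : ℝ, u x t = 4 * Real.arctan (φ t * (Real.cosh (x / γ))⁻¹)) :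
    (∀ x t : ℝ,
      deriv (deriv (fun τ => u x τ)) t =
        deriv (deriv (fun ξ => u ξ t)) x - Real.sin (u x t)) ∧
    (∀ x : ℝ, u x 0 = 0) ∧
    (∀ x : ℝ, deriv (fun τ => u x τ) 0 = (4 / γ) * (Real.cosh (x / γ))⁻¹) := by
  obtain rfl : φ = _ := funext hφ
  obtain rfl : u = _ := funext fun x => funext (hu x)
  set k := √(γ ^ 2 - 1)
  have hk : k ≠ 0 := (sqrt_pos.mpr (by nlinarith)).ne'
  have hγk : γ ^ 2 = 1 + k ^ 2 := by rw [sq_sqrt (by nlinarith)]; ring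
  refine ⟨sineGordon_breather hk hγk, fun x => by simp, fun x => ?_⟩
  rw [deriv_const_mul_arctan_comp 4 fun t =>
    (hasDerivAt_one_div_mul_sin_div_mul hk γ t).mul_const _]
  simp [field]
end
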